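/- Let G be a discrete group, N ⊴ G with G/N finite, and A a G-graded *-algebra whose degree-e component A_e is unital, with unit acting as identity on all of A. Suppose the grading is twisted over G/N: there is a family {p_{tN} : tN ∈ G/N} of mutually orthogonal self-adjoint idempotents in A_e summing to 1, such that a_s p_{tN} = p_{stN} a_s for all s, t ∈ G and a_s ∈ A_s. Then the map on generators (a_s, tN) ↦ a_s p_{tN} from the restricted crossed product A⋊(G/N) to A is a *-homomorphism: (a_r b_t) p_{uN} = (a_r p_{sN})(b_t p_{uN}) whenever sN = tuN (with a_r ∈ A_r, b_t ∈ A_t), and (a_s*) p_{stN} = (a_s p_{tN})* for all a_s ∈ A_s. -/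
import Mathlib


/-!
Statement 8: let `G` be a discrete group, `N ⊴ G` with `G/N` finite, and `A` a
`G`-graded *-algebra with unital degree-`e` component, twisted over `G/N` via a
family `{p_{tN}}` of mutually orthogonal self-adjoint idempotents in `A_e`
summing to `1`, with `a_s p_{tN} = p_{s t N} a_s`.  Then the map on generators
`(a_s, tN) ↦ a_s p_{tN}` from the restricted crossed product `A ⋊ (G/N)` to `A`
is a *-homomorphism: `(a_r b_t) p_{uN} = (a_r p_{sN})(b_t p_{uN})` whenever
`sN = t·uN`, and `(a_s*) p_{s·tN} = (a_s p_{tN})*`.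
-/

noncomputable section

variable {G : Type*} [Group G] {A : Type*} [Ring A] [Algebra ℂ A] [StarRing A]
  [StarModule ℂ A] {N : Subgroup G} [N.Normal] [Fintype (G ⧸ N)]

/-- `A` is a `G`-graded *-algebra with grading subspaces `𝒜 s`. -/
structure IsStarGrading (𝒜 : G → Submodule ℂ A) : Prop where
  one_mem : (1 : A) ∈ 𝒜 1
  mul_mem : ∀ ⦃s t : G⦄ ⦃a b : A⦄, a ∈ 𝒜 s → b ∈ 𝒜 t → a * b ∈ 𝒜 (s * t)
  star_mem : ∀ ⦃s : G⦄ ⦃a : A⦄, a ∈ 𝒜 s → star a ∈ 𝒜 s⁻¹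
  indep : iSupIndep 𝒜
  span_top : ⨆ s, 𝒜 s = ⊤

theorem twisted_coaction_map_is_star_homomorphism
    (𝒜 : G → Submodule ℂ A) (h𝒜 : IsStarGrading 𝒜)
    (p : G ⧸ N → A)
    -- `{p_{tN}}` is a family of mutually orthogonal self-adjoint idempotents
    -- in the degree-`e` component, summing to `1`
    (hp_mem : ∀ c : G ⧸ N, p c ∈ 𝒜 1)
    (hp_orth : ∀ c c' : G ⧸ N, c ≠ c' → p c * p c' = 0)
    (hp_idem : ∀ c : G ⧸ N, p c * p c = p c)
    (hp_star : ∀ c : G ⧸ N, star (p c) = p c)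
    (hp_sum : ∑ c : G ⧸ N, p c = 1)
    -- the twisting condition `a_s p_{tN} = p_{s t N} a_s`
    (hp_comm : ∀ (s : G), ∀ a ∈ 𝒜 s, ∀ c : G ⧸ N, a * p c = p ((s : G ⧸ N) * c) * a) :
    -- `(a_s, tN) ↦ a_s p_{tN}` preserves multiplication and involution on
    -- generators:
    (∀ (r t : G) (a b : A), a ∈ 𝒜 r → b ∈ 𝒜 t → ∀ sc uc : G ⧸ N,
      sc = (t : G ⧸ N) * uc → (a * b) * p uc = (a * p sc) * (b * p uc)) ∧
    (∀ (s : G) (a : A), a ∈ 𝒜 s → ∀ c : G ⧸ N,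
      star a * p ((s : G ⧸ N) * c) = star (a * p c)) := by
  constructor
  · intro r t a b ha hb sc uc hsc
    have h1 : p sc * b = b * p uc := by
      rw [hp_comm t b hb uc, hsc]
    calc (a * b) * p uc = a * b * (p uc * p uc) := by rw [hp_idem]
      _ = a * ((b * p uc) * p uc) := by simp only [mul_assoc]
      _ = a * ((p sc * b) * p uc) := by rw [h1]
      _ = (a * p sc) * (b * p uc) := by simp only [mul_assoc]
  · intro s a ha c
    have hs : star a ∈ 𝒜 s⁻¹ := h𝒜.star_mem ha
    have := hp_comm s⁻¹ (star a) hs ((s : G ⧸ N) * c)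
    rw [star_mul, hp_star]
    rw [this]
    congr 1
    congr 1
    rw [← mul_assoc]
    simp

end
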